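/- arXiv:2504.10088 — 5 statements merged into one kernel-verified Lean document; each statement's English description precedes it below -/
import Mathlib

section
/- Let n ≥ b ≥ 2 and n ≥ l ≥ b, and let z ∈ F_q^n with z_i = 0 for 1 ≤ i ≤ l. Define the tuples B_1 = ((z_{l-b+2},...,z_{l+1}),...,(z_l,z_{l+1},...,z_{l+b-1})), B_2 = ((z_{n-b+2},...,z_n,z_1),...,(z_n,z_1,...,z_{b-1})), and B_3 = ((z_{n-b+2},...,z_n,z_{l+1}),...,(z_n,z_{l+1},...,z_{l+b-1})). Then w_H(B_1) + w_H(B_2) - w_H(B_3) ≤ b - 1. -/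
open Finset

/-- Cyclic coordinate access: `cget z k` is the coordinate `z_k`, indices taken mod `n`. -/
def cget {Fq : Type*} [Zero Fq] {n : ℕ} (y : Fin n → Fq) (k : ℕ) : Fq :=
  if h : n = 0 then 0 else y ⟨k % n, Nat.mod_lt k (Nat.pos_of_ne_zero h)⟩

/-- Lemma 3.1: if `z_1 = ... = z_l = 0` then `w_H(B_1) + w_H(B_2) - w_H(B_3) <= b - 1`,
where `B_1, B_2, B_3` are the lists of `b-1` overlapping `b`-tuples of coordinates of `z`
described in the paper, and `w_H` of such a list counts its nonzero tuples. -/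
theorem lemma_B1_B2_B3 {Fq : Type*} [Field Fq] [DecidableEq Fq]
    {n b l : ℕ} (hb : 2 ≤ b) (hbn : b ≤ n) (hbl : b ≤ l) (hln : l ≤ n)
    (z : Fin n → Fq) (hz : ∀ i : ℕ, 1 ≤ i → i ≤ l → cget z i = 0) :
    ((((Finset.range (b - 1)).filter fun s =>
        ∃ j : Fin b, cget z (l - b + 2 + s + j) ≠ 0).card : ℤ) +
      ((Finset.range (b - 1)).filter fun s =>
        ∃ j : Fin b, cget z (n - b + 2 + s + j) ≠ 0).card) -
      ((Finset.range (b - 1)).filter fun s =>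
        ∃ j : Fin b, (if (j : ℕ) + s + 1 < b then cget z (n - b + 2 + s + j)
          else cget z (l + 1 + ((j : ℕ) + s + 1 - b))) ≠ 0).card ≤ (b : ℤ) - 1 := by
  have hn : 0 < n := by omega
  have hsub : ((Finset.range (b - 1)).filter fun s =>
        ∃ j : Fin b, cget z (n - b + 2 + s + j) ≠ 0) ⊆
      ((Finset.range (b - 1)).filter fun s =>
        ∃ j : Fin b, (if (j : ℕ) + s + 1 < b then cget z (n - b + 2 + s + j)
          else cget z (l + 1 + ((j : ℕ) + s + 1 - b))) ≠ 0) := by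
    intro s hs
    simp only [mem_filter, mem_range] at hs ⊢
    obtain ⟨hs1, j, hj⟩ := hs
    refine ⟨hs1, j, ?_⟩
    have hcase : (j : ℕ) + s + 1 < b := by
      by_contra hge
      apply hj
      have hjb : (j : ℕ) < b := j.isLt
      have hi : s + (j : ℕ) + 2 - b < n := by omega
      have heq : cget z (n - b + 2 + s + j) = cget z (s + (j : ℕ) + 2 - b) := by
        simp only [cget, dif_neg hn.ne']
        apply congrArg
        apply Fin.ext
        have h1 : n - b + 2 + s + (j : ℕ) = n + (s + (j : ℕ) + 2 - b) := by omega
        simp only [h1, Nat.add_mod_left, Nat.mod_eq_of_lt hi]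
      rw [heq]
      exact hz _ (by omega) (by omega)
    rw [if_pos hcase]
    exact hj
  have h2 := card_le_card hsub
  have h1 : ((Finset.range (b - 1)).filter fun s =>
        ∃ j : Fin b, cget z (l - b + 2 + s + j) ≠ 0).card ≤ b - 1 :=
    (card_filter_le _ _).trans_eq (card_range _)
  omega
end

section
/- Let n ≥ b ≥ 2, n ≥ l ≥ b, and z ∈ F_q^n. Define A_1 = ((z_{l-b+2},...,z_l,z_{l+1}),...,(z_l,z_{l+1},...,z_{l+b-1})), A_2 = ((z_{n-b+2},...,z_n,z_1),...,(z_n,z_1,...,z_{b-1})), A_3 = ((z_{l-b+2},...,z_l,z_1),...,(z_l,z_1,...,z_{b-1})), and A_4 = ((z_{n-b+2},...,z_n,z_{l+1}),...,(z_n,z_{l+1},...,z_{l+b-1})). Then w_H(A_1) + w_H(A_2) - w_H(A_3) - w_H(A_4) ≤ b - 1. -/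
open Finset

theorem cget_add_n {Fq : Type*} [Zero Fq] {n : ℕ} (y : Fin n → Fq) (k : ℕ) :
    cget y (n + k) = cget y k := by
  unfold cget
  split
  · rfl
  · congr 1
    ext
    simp [Nat.add_mod_left]

/-- Lemma 3.2: `w_H(A_1) + w_H(A_2) - w_H(A_3) - w_H(A_4) <= b - 1`, where
`A_1, A_2, A_3, A_4` are the lists of `b-1` overlapping `b`-tuples of coordinates of `z`
described in the paper, and `w_H` of such a list counts its nonzero tuples. -/
theorem lemma_A1_A2_A3_A4 {Fq : Type*} [Field Fq] [DecidableEq Fq]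
    {n b l : ℕ} (hb : 2 ≤ b) (hbn : b ≤ n) (hbl : b ≤ l) (hln : l ≤ n)
    (z : Fin n → Fq) :
    (((((Finset.range (b - 1)).filter fun s =>
        ∃ j : Fin b, cget z (l - b + 2 + s + j) ≠ 0).card : ℤ) +
      ((Finset.range (b - 1)).filter fun s =>
        ∃ j : Fin b, cget z (n - b + 2 + s + j) ≠ 0).card) -
      ((Finset.range (b - 1)).filter fun s =>
        ∃ j : Fin b, (if (j : ℕ) + s + 1 < b then cget z (l - b + 2 + s + j)
          else cget z (1 + ((j : ℕ) + s + 1 - b))) ≠ 0).card) -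
      ((Finset.range (b - 1)).filter fun s =>
        ∃ j : Fin b, (if (j : ℕ) + s + 1 < b then cget z (n - b + 2 + s + j)
          else cget z (l + 1 + ((j : ℕ) + s + 1 - b))) ≠ 0).card ≤ (b : ℤ) - 1 := by
  classical
  set P1 : ℕ → Prop := fun s => ∃ j : Fin b, cget z (l - b + 2 + s + j) ≠ 0 with hP1
  set P2 : ℕ → Prop := fun s => ∃ j : Fin b, cget z (n - b + 2 + s + j) ≠ 0 with hP2
  set P3 : ℕ → Prop := fun s => ∃ j : Fin b,
    (if (j : ℕ) + s + 1 < b then cget z (l - b + 2 + s + j)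
      else cget z (1 + ((j : ℕ) + s + 1 - b))) ≠ 0 with hP3
  set P4 : ℕ → Prop := fun s => ∃ j : Fin b,
    (if (j : ℕ) + s + 1 < b then cget z (n - b + 2 + s + j)
      else cget z (l + 1 + ((j : ℕ) + s + 1 - b))) ≠ 0 with hP4
  have key : ∀ s, P1 s → P3 s ∨ P4 s := by
    intro s ⟨j, hj⟩
    by_cases hjb : (j : ℕ) + s + 1 < b
    · left
      exact ⟨j, by rwa [if_pos hjb]⟩
    · right
      refine ⟨j, ?_⟩
      rw [if_neg hjb]
      have he : l + 1 + ((j : ℕ) + s + 1 - b) = l - b + 2 + s + j := by omega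
      rwa [he]
  have c1 : ∀ P : ℕ → Prop, ∀ _ : DecidablePred P,
      (((Finset.range (b - 1)).filter P).card : ℤ)
        = ∑ s ∈ Finset.range (b - 1), (if P s then (1 : ℤ) else 0) := by
    intro P hP
    rw [Finset.card_filter, Nat.cast_sum]
    simp
  rw [c1 P1 inferInstance, c1 P2 inferInstance, c1 P3 inferInstance, c1 P4 inferInstance]
  have pw : ∀ s ∈ Finset.range (b - 1),
      (if P1 s then (1 : ℤ) else 0) + (if P2 s then 1 else 0)
        - (if P3 s then 1 else 0) - (if P4 s then 1 else 0) ≤ 1 := by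
    intro s _
    by_cases h1 : P1 s
    · rcases key s h1 with h3 | h4
      · simp only [h1, h3, if_pos]
        split_ifs <;> norm_num
      · simp only [h1, h4, if_pos]
        split_ifs <;> norm_num
    · simp only [h1, if_neg, not_false_iff]
      split_ifs <;> norm_num
  have hsum := Finset.sum_le_sum pw
  rw [Finset.sum_sub_distrib, Finset.sum_sub_distrib, Finset.sum_add_distrib,
    Finset.sum_const, Finset.card_range, nsmul_eq_mul, mul_one] at hsum
  have hcast : ((b - 1 : ℕ) : ℤ) = (b : ℤ) - 1 := by omega
  linarith [hsum]
end

section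
/- Let n and d be positive integers with 2 ≤ d ≤ n, and let b ≥ 2. If r and m are integers satisfying b ≤ d - 2r ≤ n - m and 0 ≤ r ≤ m, then A_b(n,d,q) ≤ (q^m / B_b(m,r)) · A_b(n-m, d-2r-b+1, q). -/
open Finset

/-- The `b`-symbol weight of a vector `y ∈ Fq^n`. -/
def wtb {Fq : Type*} [Zero Fq] [DecidableEq Fq] {n : ℕ} (b : ℕ) (y : Fin n → Fq) : ℕ :=
  ((Finset.range n).filter fun i => ∃ j : Fin b, cget y (i + j) ≠ 0).card

/-- The `b`-symbol distance on `Fq^n`. -/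
def db {Fq : Type*} [Field Fq] [DecidableEq Fq] {n : ℕ} (b : ℕ) (x y : Fin n → Fq) : ℕ :=
  wtb b (x - y)

/-- Cardinality of a `b`-ball of radius `r` in `Fq^n` (centered at `0`;
it is independent of the center). -/
def ballCard (Fq : Type*) [Field Fq] [Fintype Fq] [DecidableEq Fq] (n b r : ℕ) : ℕ :=
  (Finset.univ.filter fun y : Fin n → Fq => db b y 0 ≤ r).card

/-- Cardinality of a `b`-sphere of radius `r` in `Fq^n`. -/
def sphereCard (Fq : Type*) [Field Fq] [Fintype Fq] [DecidableEq Fq] (n b r : ℕ) : ℕ :=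
  (Finset.univ.filter fun y : Fin n → Fq => db b y 0 = r).card

/-- `Asize Fq n b d` : the largest size of a code in `Fq^n` with minimum `b`-symbol
distance at least `d`. -/
noncomputable def Asize (Fq : Type*) [Field Fq] [Fintype Fq] [DecidableEq Fq] (n b d : ℕ) : ℕ :=
  sSup {M | ∃ C : Finset (Fin n → Fq),
    (∀ x ∈ C, ∀ y ∈ C, x ≠ y → d ≤ db b x y) ∧ C.card = M}

/-!
Split each word of `F_q^n` into its first `n - m` and its last `m` coordinates, both read
cyclically. Apart from the `b - 1` windows starting just before the cut, every nonzero `b`-window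
of `z` is a nonzero window of one of the two pieces, so
`wt_b z ≤ wt_b (prefix z) + wt_b (suffix z) + (b - 1)`.

Fix an optimal code `C` and a centre `c ∈ F_q^m`. The codewords whose suffix lies in the ball of
radius `r` around `c` have suffixes at mutual distance `≤ 2r`, so their prefixes are pairwise at
distance `≥ d - 2r - (b - 1) ≥ 1`: they form a code of length `n - m` and distance
`d - 2r - b + 1`. Each codeword lies in `B_b(m, r)` of these `q^m` subcodes, so
`|C| · B_b(m, r) ≤ q^m · A_b(n - m, d - 2r - b + 1)`.
-/

def takeLast {α : Type*} {n : ℕ} (m : ℕ) (h : m ≤ n) (v : Fin n → α) : Fin m → α :=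
  fun i => v ⟨n - m + i, by omega⟩

def IsCodeOfDist {Fq : Type*} [Field Fq] [DecidableEq Fq] {n : ℕ} (b d : ℕ)
    (C : Finset (Fin n → Fq)) : Prop :=
  ∀ x ∈ C, ∀ y ∈ C, x ≠ y → d ≤ db b x y

section Cyclic

variable {Fq : Type*} {n : ℕ}

theorem cget_of_lt [Zero Fq] (y : Fin n → Fq) {k : ℕ} (hk : k < n) : cget y k = y ⟨k, hk⟩ := by
  rw [cget, dif_neg (by omega)]
  congr
  exact Nat.mod_eq_of_lt hk

theorem cget_of_le [Zero Fq] (y : Fin n → Fq) {k : ℕ} (hk : n ≤ k) : cget y k = cget y (k - n) := by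
  unfold cget
  split_ifs
  · rfl
  · congr 2
    exact Nat.mod_eq_sub_mod hk

theorem cget_take [Zero Fq] {N : ℕ} (h : N ≤ n) (y : Fin n → Fq) {k : ℕ} (hk : k < N) :
    cget (Fin.take N h y) k = cget y k := by
  rw [cget_of_lt _ hk, cget_of_lt _ (by omega), Fin.take_apply]
  rfl

theorem cget_takeLast [Zero Fq] {m : ℕ} (h : m ≤ n) (y : Fin n → Fq) {k : ℕ} (hk : k < m) :
    cget (takeLast m h y) k = cget y (n - m + k) := by
  rw [cget_of_lt _ hk, cget_of_lt _ (by omega)]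
  rfl

theorem cget_zero [Zero Fq] (k : ℕ) : cget (0 : Fin n → Fq) k = 0 := by
  unfold cget
  split <;> simp

theorem cget_add [AddGroup Fq] (u v : Fin n → Fq) (k : ℕ) :
    cget (u + v) k = cget u k + cget v k := by
  unfold cget
  split <;> simp

theorem cget_neg [AddGroup Fq] (u : Fin n → Fq) (k : ℕ) : cget (-u) k = -cget u k := by
  unfold cget
  split <;> simp

variable [DecidableEq Fq]

theorem wtb_zero [Zero Fq] (b : ℕ) : wtb b (0 : Fin n → Fq) = 0 := by
  simp [wtb, cget_zero]

theorem wtb_neg [AddGroup Fq] (b : ℕ) (u : Fin n → Fq) : wtb b (-u) = wtb b u := by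
  simp [wtb, cget_neg]

theorem wtb_add_le [AddGroup Fq] (b : ℕ) (u v : Fin n → Fq) :
    wtb b (u + v) ≤ wtb b u + wtb b v := by
  refine (card_le_card fun i hi => ?_).trans (card_union_le _ _)
  simp only [mem_filter, mem_union, mem_range, cget_add] at hi ⊢
  obtain ⟨hin, j, hj⟩ := hi
  by_cases hu : cget u (i + j) = 0
  · exact Or.inr ⟨hin, j, by simpa [hu] using hj⟩
  · exact Or.inl ⟨hin, j, hu⟩

def nonzeroWindows [Zero Fq] (b : ℕ) (y : Fin n → Fq) : Finset ℕ :=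
  (range n).filter fun i => ∃ j : Fin b, cget y (i + j) ≠ 0

/-- A window starting in the suffix either stays inside it or wraps around into the prefix, where
it is a prefix window shifted by `m`; a window starting in the prefix is a window of the prefix
unless it starts in `[N - b + 1, N)`. -/
theorem nonzeroWindows_subset [Zero Fq] {m b : ℕ} (hm : m ≤ n) (hbN : b ≤ n - m)
    (z : Fin n → Fq) :
    let N := n - m
    let P := nonzeroWindows b (Fin.take N (Nat.sub_le n m) z)
    nonzeroWindows b z ⊆ P.filter (· + b ≤ N) ∪ Ico (N - b + 1) N ∪
      (nonzeroWindows b (takeLast m hm z)).image (· + N) ∪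
      (P.filter fun i => ¬ i + b ≤ N).image (· + m) := by
  intro N P i hi
  simp only [nonzeroWindows, mem_filter, mem_range] at hi
  obtain ⟨hin, j, hj⟩ := hi
  have hjb := j.isLt
  simp only [P, nonzeroWindows, mem_union, mem_filter, mem_image, mem_Ico, mem_range]
  by_cases hiN : i < N
  · by_cases hib : i + b ≤ N
    · exact Or.inl (Or.inl (Or.inl ⟨⟨hiN, j, by rwa [cget_take _ _ (by omega)]⟩, hib⟩))
    · exact Or.inl (Or.inl (Or.inr ⟨by omega, hiN⟩))
  by_cases hijn : i + j < n
  · refine Or.inl (Or.inr ⟨i - N, ⟨by omega, j, ?_⟩, by omega⟩)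
    rwa [cget_takeLast _ _ (by omega), show n - m + (i - N + j) = i + j by omega]
  · refine Or.inr ⟨i - m, ⟨⟨by omega, j, ?_⟩, by omega⟩, by omega⟩
    rwa [cget_of_le _ (by omega : N ≤ i - m + j), cget_take _ _ (by omega),
      show i - m + j - N = i + j - n by omega, ← cget_of_le _ (by omega)]

theorem wtb_le_wtb_take_add_wtb_takeLast [Zero Fq] {m b : ℕ} (hm : m ≤ n) (hbN : b ≤ n - m)
    (z : Fin n → Fq) :
    wtb b z ≤ wtb b (Fin.take (n - m) (Nat.sub_le n m) z) + wtb b (takeLast m hm z) + (b - 1) := by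
  set N := n - m
  set P := nonzeroWindows b (Fin.take N (Nat.sub_le n m) z)
  set Q := nonzeroWindows b (takeLast m hm z)
  have hP := card_filter_add_card_filter_not (s := P) (· + b ≤ N)
  have hIco : (Ico (N - b + 1) N).card = b - 1 := by
    rw [Nat.card_Ico]
    omega
  calc wtb b z ≤ (P.filter (· + b ≤ N) ∪ Ico (N - b + 1) N ∪ Q.image (· + N) ∪
          (P.filter fun i => ¬ i + b ≤ N).image (· + m)).card :=
        card_le_card (nonzeroWindows_subset hm hbN z)
    _ ≤ (P.filter (· + b ≤ N)).card + (Ico (N - b + 1) N).card + Q.card +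
          (P.filter fun i => ¬ i + b ≤ N).card := by
        grw [card_union_le, card_union_le, card_union_le, card_image_le, card_image_le]
    _ = P.card + Q.card + (b - 1) := by omega

end Cyclic

section Distance

variable {Fq : Type*} [Field Fq] [DecidableEq Fq] {n : ℕ}

theorem db_self (b : ℕ) (x : Fin n → Fq) : db b x x = 0 := by
  rw [db, sub_self, wtb_zero]

theorem db_comm (b : ℕ) (x y : Fin n → Fq) : db b x y = db b y x := by
  rw [db, db, ← neg_sub, wtb_neg]

theorem db_triangle (b : ℕ) (x y z : Fin n → Fq) : db b x z ≤ db b x y + db b y z := by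
  simpa only [db, sub_add_sub_cancel] using wtb_add_le b (x - y) (y - z)

theorem db_le_db_take_add_db_takeLast {m b : ℕ} (hm : m ≤ n) (hbN : b ≤ n - m)
    (x y : Fin n → Fq) :
    db b x y ≤ db b (Fin.take (n - m) (Nat.sub_le n m) x) (Fin.take (n - m) (Nat.sub_le n m) y) +
      db b (takeLast m hm x) (takeLast m hm y) + (b - 1) :=
  wtb_le_wtb_take_add_wtb_takeLast hm hbN (x - y)

theorem card_filter_db_le_eq_ballCard [Fintype Fq] {m : ℕ} (b r : ℕ) (s : Fin m → Fq) :
    (univ.filter fun c => db b s c ≤ r).card = ballCard Fq m b r :=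
  card_equiv (Equiv.subLeft s) fun c => by
    rw [mem_filter, mem_filter]
    simp [db]

theorem ballCard_pos [Fintype Fq] (m b r : ℕ) : 0 < ballCard Fq m b r :=
  card_pos.2 ⟨0, by simp [db_self]⟩

theorem sum_card_filter_db_le [Fintype Fq] {α : Type*} {m : ℕ} (C : Finset α)
    (g : α → Fin m → Fq) (b r : ℕ) :
    ∑ c : Fin m → Fq, (C.filter fun x => db b (g x) c ≤ r).card = C.card * ballCard Fq m b r := by
  simp only [card_filter]
  rw [sum_comm]
  simp only [← card_filter, card_filter_db_le_eq_ballCard, sum_const, smul_eq_mul]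

end Distance

section Asize

variable {Fq : Type*} [Field Fq] [Fintype Fq] [DecidableEq Fq]

theorem bddAbove_card_isCodeOfDist (n b d : ℕ) :
    BddAbove {M | ∃ C : Finset (Fin n → Fq), IsCodeOfDist b d C ∧ C.card = M} :=
  ⟨Fintype.card (Fin n → Fq), by rintro M ⟨C, -, rfl⟩; exact card_le_univ C⟩

theorem exists_isCodeOfDist_card_eq_Asize (n b d : ℕ) :
    ∃ C : Finset (Fin n → Fq), IsCodeOfDist b d C ∧ C.card = Asize Fq n b d := by
  have hne : {M | ∃ C : Finset (Fin n → Fq), IsCodeOfDist b d C ∧ C.card = M}.Nonempty :=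
    ⟨0, ∅, by simp [IsCodeOfDist], rfl⟩
  exact Nat.sSup_mem hne (bddAbove_card_isCodeOfDist n b d)

theorem card_le_Asize {n b d : ℕ} {C : Finset (Fin n → Fq)} (hC : IsCodeOfDist b d C) :
    C.card ≤ Asize Fq n b d :=
  le_csSup (bddAbove_card_isCodeOfDist n b d) ⟨C, hC, rfl⟩

theorem card_le_Asize_of_le_db_map {α : Type*} {n b d : ℕ} (hd : 1 ≤ d) (f : α → Fin n → Fq)
    {C : Finset α} (hf : ∀ x ∈ C, ∀ y ∈ C, x ≠ y → d ≤ db b (f x) (f y)) :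
    C.card ≤ Asize Fq n b d := by
  have hinj : Set.InjOn f C := by
    intro x hx y hy hxy
    by_contra hne
    have := hf x hx y hy hne
    rw [hxy, db_self] at this
    omega
  rw [← card_image_of_injOn hinj]
  refine card_le_Asize fun u hu v hv huv => ?_
  obtain ⟨x, hx, rfl⟩ := mem_image.1 hu
  obtain ⟨y, hy, rfl⟩ := mem_image.1 hv
  exact hf x hx y hy fun h => huv (h ▸ rfl)

theorem card_filter_db_takeLast_le_Asize {n m b d r : ℕ} (hm : m ≤ n) (hb : 1 ≤ b)
    (hbd : b ≤ d - 2 * r) (hbN : b ≤ n - m) {C : Finset (Fin n → Fq)} (hC : IsCodeOfDist b d C)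
    (c : Fin m → Fq) :
    (C.filter fun x => db b (takeLast m hm x) c ≤ r).card ≤
      Asize Fq (n - m) b (d - 2 * r - b + 1) := by
  refine card_le_Asize_of_le_db_map (Nat.le_add_left 1 _) (Fin.take (n - m) (Nat.sub_le n m))
    fun x hx y hy hxy => ?_
  rw [mem_filter] at hx hy
  have hlast : db b (takeLast m hm x) (takeLast m hm y) ≤ 2 * r :=
    (db_triangle b _ c _).trans (by rw [db_comm b c]; omega)
  have := (hC x hx.1 y hy.1 hxy).trans (db_le_db_take_add_db_takeLast hm hbN x y)
  omega

end Asize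

theorem recurrence_bound_general {Fq : Type*} [Field Fq] [Fintype Fq] [DecidableEq Fq]
    {n d b r m : ℕ} (hb : 2 ≤ b)
    (h1 : b ≤ d - 2 * r) (h2 : d - 2 * r ≤ n - m) :
    (Asize Fq n b d : ℝ) ≤
      (Fintype.card Fq : ℝ) ^ m / (ballCard Fq m b r : ℝ) *
        (Asize Fq (n - m) b (d - 2 * r - b + 1) : ℝ) := by
  have hm : m ≤ n := by omega
  obtain ⟨C, hC, hCcard⟩ := exists_isCodeOfDist_card_eq_Asize (Fq := Fq) n b d
  have hcount : Asize Fq n b d * ballCard Fq m b r ≤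
      Fintype.card Fq ^ m * Asize Fq (n - m) b (d - 2 * r - b + 1) := by
    rw [← hCcard, ← sum_card_filter_db_le C (takeLast m hm)]
    calc _ ≤ ∑ _c : Fin m → Fq, Asize Fq (n - m) b (d - 2 * r - b + 1) :=
          sum_le_sum fun c _ =>
            card_filter_db_takeLast_le_Asize hm (by omega) h1 (h1.trans h2) hC c
      _ = _ := by simp
  rw [div_mul_eq_mul_div, le_div_iff₀ (by exact_mod_cast ballCard_pos m b r)]
  exact_mod_cast hcount

/-- Theorem 3.3 (recurrence relation): if `b ≤ d - 2r ≤ n - m` and `0 ≤ r ≤ m`, then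
`A_b(n,d,q) ≤ (q^m / B_b(m,r)) · A_b(n-m, d-2r-b+1, q)`. -/
theorem recurrence_bound {Fq : Type*} [Field Fq] [Fintype Fq] [DecidableEq Fq]
    {n d b r m : ℕ} (hb : 2 ≤ b) (hd2 : 2 ≤ d) (hdn : d ≤ n)
    (h1 : b ≤ d - 2 * r) (h2 : d - 2 * r ≤ n - m) (hrm : r ≤ m) :
    (Asize Fq n b d : ℝ) ≤
      (Fintype.card Fq : ℝ) ^ m / (ballCard Fq m b r : ℝ) *
        (Asize Fq (n - m) b (d - 2 * r - b + 1) : ℝ) :=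
  recurrence_bound_general hb h1 h2
end

section
/- Fix a basis representation F_{q^b} = F_q(γ) and define δ : F_q^n → F_{q^b}^n by δ(x)_i = x_i + x_{i+1}γ + ... + x_{i+b-1}γ^{b-1} (indices mod n). Then δ is injective, and for all x, y ∈ F_q^n, the Hamming distance d_H(δ(x), δ(y)) equals the b-symbol distance d_b(x,y). In particular, if C ⊆ F_q^n is a code of size M with minimum b-symbol distance d, then δ(C) ⊆ F_{q^b}^n is a code of size M with minimum Hamming distance d. -/
open Finset

lemma cget_sub {Fq : Type*} [AddGroup Fq] {n : ℕ} (x y : Fin n → Fq) (k : ℕ) :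
    cget (x - y) k = cget x k - cget y k := by
  unfold cget
  split <;> simp

lemma sum_basis_eq_zero_iff {Fq K : Type*} [Field Fq] [Field K] [Algebra Fq K]
    {b : ℕ} {γ : K} (hγ : LinearIndependent Fq fun j : Fin b => γ ^ (j : ℕ))
    (c : Fin b → Fq) :
    (∑ j : Fin b, algebraMap Fq K (c j) * γ ^ (j : ℕ)) = 0 ↔ ∀ j, c j = 0 := by
  constructor
  · intro h
    have h' : ∑ j ∈ Finset.univ, c j • γ ^ (j : ℕ) = 0 := by
      simpa [Algebra.smul_def] using h
    intro j
    exact linearIndependent_iff'.mp hγ Finset.univ c h' j (Finset.mem_univ j)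
  · intro h
    simp [h]

/-- Proposition 4.3: the map `δ : Fq^n → K^n`, `δ(x)_i = Σ_j x_{i+j} γ^j` (indices
mod `n`), where `K = F_{q^b} = Fq(γ)` with power basis `1, γ, …, γ^{b-1}`, is injective
and transforms the `b`-symbol distance into the Hamming distance; consequently a code
`C ⊆ Fq^n` of size `M` with minimum `b`-symbol distance `d` yields the code
`δ(C) ⊆ K^n` of size `M` with minimum Hamming distance `d`. -/
theorem embedding_b_to_hamming {Fq : Type*} [Field Fq] [Fintype Fq] [DecidableEq Fq]
    {K : Type*} [Field K] [Fintype K] [DecidableEq K] [Algebra Fq K]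
    {n b : ℕ} (hb1 : 1 ≤ b) (hbn : b ≤ n) (γ : K)
    (hcard : Fintype.card K = Fintype.card Fq ^ b)
    (hγ : LinearIndependent Fq fun j : Fin b => γ ^ (j : ℕ)) :
    Function.Injective
        (fun x : Fin n → Fq => fun i : Fin n =>
          ∑ j : Fin b, algebraMap Fq K (cget x ((i : ℕ) + j)) * γ ^ (j : ℕ)) ∧
      (∀ x y : Fin n → Fq,
        hammingDist
          (fun i : Fin n => ∑ j : Fin b, algebraMap Fq K (cget x ((i : ℕ) + j)) * γ ^ (j : ℕ))
          (fun i : Fin n => ∑ j : Fin b, algebraMap Fq K (cget y ((i : ℕ) + j)) * γ ^ (j : ℕ))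
          = db b x y) ∧
      ∀ (C : Finset (Fin n → Fq)) (d : ℕ),
        (∀ x ∈ C, ∀ y ∈ C, x ≠ y → d ≤ db b x y) →
        ((C.image fun x : Fin n → Fq => fun i : Fin n =>
            ∑ j : Fin b, algebraMap Fq K (cget x ((i : ℕ) + j)) * γ ^ (j : ℕ)).card = C.card ∧
          ∀ u ∈ (C.image fun x : Fin n → Fq => fun i : Fin n =>
              ∑ j : Fin b, algebraMap Fq K (cget x ((i : ℕ) + j)) * γ ^ (j : ℕ)),
            ∀ v ∈ (C.image fun x : Fin n → Fq => fun i : Fin n =>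
              ∑ j : Fin b, algebraMap Fq K (cget x ((i : ℕ) + j)) * γ ^ (j : ℕ)),
              u ≠ v → d ≤ hammingDist u v) := by
  set δ : (Fin n → Fq) → (Fin n → K) := fun x => fun i : Fin n =>
    ∑ j : Fin b, algebraMap Fq K (cget x ((i : ℕ) + j)) * γ ^ (j : ℕ) with hδ
  have key : ∀ (x y : Fin n → Fq) (i : Fin n),
      δ x i ≠ δ y i ↔ ∃ j : Fin b, cget (x - y) ((i : ℕ) + j) ≠ 0 := by
    intro x y i
    have hsub : δ x i - δ y i
        = ∑ j : Fin b, algebraMap Fq K (cget (x - y) ((i : ℕ) + j)) * γ ^ (j : ℕ) := by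
      simp [hδ, cget_sub, map_sub, sub_mul, Finset.sum_sub_distrib]
    rw [← sub_ne_zero, hsub, Ne, sum_basis_eq_zero_iff hγ]
    push_neg
    rfl
  have hdist : ∀ x y : Fin n → Fq, hammingDist (δ x) (δ y) = db b x y := by
    intro x y
    rw [hammingDist, db, wtb]
    apply Finset.card_bij (fun (i : Fin n) _ => (i : ℕ))
    · intro i hi
      simp only [Finset.mem_filter, Finset.mem_univ, true_and] at hi
      simp only [Finset.mem_filter, Finset.mem_range]
      exact ⟨i.isLt, (key x y i).mp hi⟩
    · intro i _ j _ h
      exact Fin.val_injective h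
    · intro k hk
      simp only [Finset.mem_filter, Finset.mem_range] at hk
      refine ⟨⟨k, hk.1⟩, ?_, rfl⟩
      simp only [Finset.mem_filter, Finset.mem_univ, true_and]
      exact (key x y ⟨k, hk.1⟩).mpr hk.2
  have hinj : Function.Injective δ := by
    intro x y h
    have h0 : db b x y = 0 := by rw [← hdist x y, h, hammingDist_self]
    rw [db, wtb, Finset.card_eq_zero, Finset.filter_eq_empty_iff] at h0
    funext i
    have hi : (i : ℕ) ∈ Finset.range n := Finset.mem_range.mpr i.isLt
    have := h0 hi
    push_neg at this
    have hz := this ⟨0, hb1⟩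
    have hn : n ≠ 0 := Nat.pos_iff_ne_zero.mp (lt_of_lt_of_le (Nat.lt_of_lt_of_le Nat.zero_lt_one hb1) hbn)
    simp only [Fin.val_mk, Nat.add_zero, cget, hn, dif_neg, Nat.mod_eq_of_lt i.isLt] at hz
    have := sub_eq_zero.mp (by simpa using hz)
    exact congrArg (fun f => f) this ▸ this
  refine ⟨hinj, hdist, ?_⟩
  intro C d hC
  constructor
  · exact Finset.card_image_of_injective C hinj
  · intro u hu v hv huv
    obtain ⟨x, hx, rfl⟩ := Finset.mem_image.mp hu
    obtain ⟨y, hy, rfl⟩ := Finset.mem_image.mp hv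
    have hxy : x ≠ y := fun h => huv (by rw [h])
    calc d ≤ db b x y := hC x hx y hy hxy
    _ = hammingDist (δ x) (δ y) := (hdist x y).symm
end

section
/- Let C ⊆ F_q^n be a code of size M with distance distribution B_i^b(C) = (1/M)|{(u,v) ∈ C² : d_b(u,v) = i}| with respect to the b-symbol distance. Then for every integer 0 ≤ k ≤ n, Σ_{i=0}^{n} B_i^b(C) · K_k^{N,q}(i·q^{b-1}) ≥ 0, where N = (q^b-1)n/(q-1) and K_k^{N,q} is the Krawtchouk polynomial. -/
open Finset

/-!
Concatenating with the `q`-ary simplex code of dimension `b` — the map sending the `b`-symbol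
windows `w` of `u` to the values `w ⬝ᵥ r` at representatives `r` of the points of `ℙ(F_q^b)` —
turns `d_b` into `q^(b-1)` times the Hamming distance on a space of length
`N = (q^b - 1) n / (q - 1)`: the points of `ℙ(F_q^b)` off the hyperplane `w^⊥` of a nonzero
window `w` are as many as the vectors of `w^⊥`, namely `q^(b-1)`.
The inequality is thereby reduced to Delsarte's inequality in the Hamming scheme. There,
`K_k(w_H(x - y)) = Σ_{w_H(v) = k} ψ(v ⬝ᵥ x) conj(ψ(v ⬝ᵥ y))` for a primitive additive
character `ψ`, so the sum over pairs of codewords is `Σ_{w_H(v) = k} |Σ_{x ∈ C} ψ(v ⬝ᵥ x)|² ≥ 0`.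
The character-sum formula for `K_k` is the coefficient of `X^k` in
`Σ_v ψ(v ⬝ᵥ x) X^{w_H(v)} = (1 - X)^{w_H(x)} (1 + (q - 1) X)^{N - w_H(x)}`,
which factors over the coordinates.
-/

open Polynomial ComplexConjugate
open scoped LinearAlgebra.Projectivization

theorem AddChar.map_sum_eq_prod {A M ι : Type*} [AddCommMonoid A] [CommMonoid M]
    (ψ : AddChar A M) (s : Finset ι) (f : ι → A) : ψ (∑ i ∈ s, f i) = ∏ i ∈ s, ψ (f i) := by
  classical
  induction s using Finset.induction_on with
  | empty => simp
  | insert a s ha ih => rw [sum_insert ha, prod_insert ha, AddChar.map_add_eq_mul, ih]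

theorem Polynomial.coeff_one_add_C_mul_X_pow {R : Type*} [CommRing R] (a : R) (m j : ℕ) :
    ((1 + C a * X) ^ m).coeff j = a ^ j * m.choose j := by
  rw [add_comm, add_pow]
  simp only [mul_pow, one_pow, mul_one, finsetSum_coeff, ← C_pow, ← C_eq_natCast, mul_assoc,
    coeff_C_mul, mul_comm (X ^ _)]
  rw [sum_eq_single j]
  · simp
  · intro i _ hi
    simp [Ne.symm hi]
  · intro hj
    rw [mem_range, not_lt] at hj
    simp [Nat.choose_eq_zero_of_lt hj]

section Krawtchouk

def krawtchouk (R : Type*) [CommRing R] (N q k x : ℕ) : R :=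
  ∑ j ∈ range (k + 1),
    (-1 : R) ^ j * ((q : R) - 1) ^ (k - j) * (x.choose j : R) * ((N - x).choose (k - j) : R)

theorem map_krawtchouk {R S : Type*} [CommRing R] [CommRing S] (f : R →+* S) (N q k x : ℕ) :
    f (krawtchouk R N q k x) = krawtchouk S N q k x := by
  simp [krawtchouk, map_sum]

theorem krawtchouk_eq_coeff {R : Type*} [CommRing R] (N q k x : ℕ) :
    krawtchouk R N q k x
      = ((1 + C (-1) * X) ^ x * (1 + C ((q : R) - 1) * X) ^ (N - x)).coeff k := by
  rw [coeff_mul, Nat.sum_antidiagonal_eq_sum_range_succ_mk]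
  simp only [coeff_one_add_C_mul_X_pow, krawtchouk]
  exact sum_congr rfl fun j _ => by ring

variable {F R I : Type*} [Field F] [Fintype F] [DecidableEq F] [CommRing R] [IsDomain R]
  [Fintype I] [DecidableEq I]

theorem sum_C_addChar_mul_X_pow_ite {ψ : AddChar F R} (hψ : ψ.IsPrimitive) (y : F) :
    ∑ c : F, C (ψ (c * y)) * X ^ (if c ≠ 0 then 1 else 0)
      = 1 + C ((if y = 0 then (Fintype.card F : R) else 0) - 1) * X := by
  have hsum := AddChar.sum_mulShift y hψ
  rw [← add_sum_erase _ _ (mem_univ 0)] at hsum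
  push_cast at hsum
  have hX : ∀ c ∈ univ.erase (0 : F),
      C (ψ (c * y)) * X ^ (if c ≠ 0 then 1 else 0) = C (ψ (c * y)) * X := by
    intro c hc
    simp [ne_of_mem_erase hc]
  rw [← add_sum_erase _ _ (mem_univ 0), sum_congr rfl hX, ← sum_mul, ← hsum]
  simp [map_sum]

theorem sum_C_addChar_dotProduct_mul_X_pow_hammingNorm {ψ : AddChar F R} (hψ : ψ.IsPrimitive)
    (x : I → F) :
    ∑ v : I → F, C (ψ (v ⬝ᵥ x)) * X ^ hammingNorm v
      = (1 + C (-1) * X) ^ hammingNorm x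
        * (1 + C ((Fintype.card F : R) - 1) * X) ^ (Fintype.card I - hammingNorm x) := by
  have hfactor : ∀ v : I → F, C (ψ (v ⬝ᵥ x)) * X ^ hammingNorm v
      = ∏ i, C (ψ (v i * x i)) * X ^ (if v i ≠ 0 then 1 else 0) := by
    intro v
    rw [prod_mul_distrib, prod_pow_eq_pow_sum, ← map_prod, ← AddChar.map_sum_eq_prod,
      ← card_filter]
    rfl
  have hzeros : #{i | x i = 0} = Fintype.card I - hammingNorm x := by
    have := card_filter_add_card_filter_not (s := (univ : Finset I)) (fun i => x i = 0)
    simp only [hammingNorm, ne_eq, card_univ] at this ⊢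
    omega
  simp_rw [hfactor]
  rw [← Fintype.prod_sum fun i (c : F) => C (ψ (c * x i)) * X ^ (if c ≠ 0 then 1 else 0)]
  simp_rw [sum_C_addChar_mul_X_pow_ite hψ, apply_ite (fun r : R => 1 + C (r - 1) * X), zero_sub]
  rw [prod_ite, prod_const, prod_const, hzeros, mul_comm]
  rfl

theorem sum_addChar_dotProduct_eq_krawtchouk {ψ : AddChar F R} (hψ : ψ.IsPrimitive)
    (x : I → F) (k : ℕ) :
    ∑ v : I → F with hammingNorm v = k, ψ (v ⬝ᵥ x)
      = krawtchouk R (Fintype.card I) (Fintype.card F) k (hammingNorm x) := by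
  rw [krawtchouk_eq_coeff, ← sum_C_addChar_dotProduct_mul_X_pow_hammingNorm hψ, finsetSum_coeff]
  simp [sum_filter, eq_comm]

theorem sum_krawtchouk_hammingDist_nonneg {α : Type*} (f : α → I → F) (s : Finset α) (k : ℕ) :
    0 ≤ ∑ p ∈ s ×ˢ s,
      krawtchouk ℝ (Fintype.card I) (Fintype.card F) k (hammingDist (f p.1) (f p.2)) := by
  set ψ := AddChar.FiniteField.primitiveChar_to_Complex F
  have hψ : ψ.IsPrimitive := AddChar.FiniteField.primitiveChar_to_Complex_isPrimitive F
  have hsq : ((∑ p ∈ s ×ˢ s, krawtchouk ℝ (Fintype.card I) (Fintype.card F) k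
      (hammingDist (f p.1) (f p.2)) : ℝ) : ℂ)
      = ((∑ v : I → F with hammingNorm v = k, ‖∑ a ∈ s, ψ (v ⬝ᵥ f a)‖ ^ 2 : ℝ) : ℂ) := by
    calc _ = ∑ p ∈ s ×ˢ s, ∑ v : I → F with hammingNorm v = k,
          conj (ψ (v ⬝ᵥ f p.1)) * ψ (v ⬝ᵥ f p.2) := by
          push_cast
          refine sum_congr rfl fun p _ => ?_
          rw [← Complex.ofRealHom_eq_coe, map_krawtchouk, hammingDist_eq_hammingNorm,
            ← sum_addChar_dotProduct_eq_krawtchouk hψ]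
          simp [dotProduct_add, AddChar.map_add_eq_mul, AddChar.map_neg_eq_conj]
      _ = ∑ v : I → F with hammingNorm v = k,
          conj (∑ a ∈ s, ψ (v ⬝ᵥ f a)) * ∑ a ∈ s, ψ (v ⬝ᵥ f a) := by
          rw [sum_comm]
          simp only [sum_product, map_sum, sum_mul_sum]
      _ = _ := by
          push_cast
          exact sum_congr rfl fun v _ => Complex.conj_mul' _
  rw [Complex.ofReal_inj.mp hsq]
  positivity

end Krawtchouk

section ProjectiveSpace

variable {K V : Type*} [Field K] [AddCommGroup V] [Module K V]

theorem LinearMap.card_ker_mul_card_of_ne_zero {f : V →ₗ[K] K} (hf : f ≠ 0) :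
    Nat.card (ker f) * Nat.card K = Nat.card V := by
  rw [Submodule.card_eq_card_quotient_mul_card (ker f),
    Nat.card_congr (f.quotKerEquivOfSurjective (surjective_of_ne_zero hf)).toEquiv]

theorem Projectivization.card_apply_ne_zero_eq_mul (f : V →ₗ[K] K) :
    Nat.card {v : V // f v ≠ 0} = Nat.card {p : ℙ K V // f p.rep ≠ 0} * (Nat.card K - 1) := by
  rw [← Nat.card_units, ← Nat.card_prod]
  refine Nat.card_congr <|
    (Equiv.subtypeSubtypeEquivSubtype fun {v} (h : f v ≠ 0) => ne_zero_of_map h).symm.trans <|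
      ((nonZeroEquivProjectivizationProdUnits K V).subtypeEquiv fun v => ?_).trans
        Equiv.prodSubtypeFstEquivSubtypeProd
  obtain ⟨a, ha⟩ := exists_smul_eq_mk_rep K v.1 v.2
  change f v ≠ 0 ↔ f (mk K v.1 v.2).rep ≠ 0
  rw [← ha, Units.smul_def, map_smul, smul_eq_mul]
  simp

theorem Projectivization.card_apply_rep_ne_zero [Finite K] [Finite V] {f : V →ₗ[K] K}
    (hf : f ≠ 0) : Nat.card {p : ℙ K V // f p.rep ≠ 0} = Nat.card (LinearMap.ker f) := by
  have hq : 1 < Nat.card K := Finite.one_lt_card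
  have hcompl : Nat.card {v : V // f v ≠ 0} + Nat.card (LinearMap.ker f) = Nat.card V := by
    classical
    rw [← Nat.card_sum]
    exact Nat.card_congr <| (Equiv.sumCongr (Equiv.refl _)
      (Equiv.subtypeEquivRight fun v => by simp)).trans (Equiv.sumCompl _)
  have hker := LinearMap.card_ker_mul_card_of_ne_zero hf
  have hsub := Nat.mul_sub_one (Nat.card (LinearMap.ker f)) (Nat.card K)
  rw [card_apply_ne_zero_eq_mul] at hcompl
  refine Nat.eq_of_mul_eq_mul_right (Nat.sub_pos_of_lt hq) ?_
  omega

theorem card_dotProduct_rep_ne_zero [Fintype K] {b : ℕ} {w : Fin b → K} (hw : w ≠ 0) :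
    Nat.card {p : ℙ K (Fin b → K) // w ⬝ᵥ p.rep ≠ 0} = Fintype.card K ^ (b - 1) := by
  have hf : dotProductEquiv K (Fin b) w ≠ 0 :=
    (map_ne_zero_iff _ (dotProductEquiv K (Fin b)).injective).mpr hw
  have hb : 0 < b := Nat.pos_of_ne_zero <| by rintro rfl; exact hw (Subsingleton.elim _ _)
  have hker := LinearMap.card_ker_mul_card_of_ne_zero hf
  rw [Nat.card_fun, Nat.card_fin, Nat.card_eq_fintype_card (α := K),
    ← pow_sub_mul_pow _ hb, pow_one] at hker
  rw [← Nat.eq_of_mul_eq_mul_right Fintype.card_pos hker]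
  exact Projectivization.card_apply_rep_ne_zero hf

end ProjectiveSpace

section SimplexConcatenation

variable {F : Type*} [Field F] {n b : ℕ}

theorem cget_sub_s17 (u v : Fin n → F) (m : ℕ) : cget (u - v) m = cget u m - cget v m := by
  unfold cget
  split_ifs <;> simp

def window (b : ℕ) (u : Fin n → F) (i : ℕ) : Fin b → F := fun j => cget u (i + j)

theorem window_sub (u v : Fin n → F) (i : ℕ) :
    window b (u - v) i = window b u i - window b v i :=
  funext fun j => cget_sub_s17 u v (i + j)

theorem wtb_eq_card_window_ne_zero [DecidableEq F] (u : Fin n → F) :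
    wtb b u = #{i ∈ range n | window b u i ≠ 0} := by
  simp only [wtb, window, ne_eq, funext_iff, Pi.zero_apply, not_forall]

theorem wtb_le [DecidableEq F] (u : Fin n → F) : wtb b u ≤ n :=
  (card_filter_le _ _).trans (card_range n).le

noncomputable def simplexConcat (b : ℕ) (u : Fin n → F) : Fin n × ℙ F (Fin b → F) → F :=
  fun x => window b u x.1 ⬝ᵥ x.2.rep

theorem simplexConcat_sub (u v : Fin n → F) :
    simplexConcat b (u - v) = simplexConcat b u - simplexConcat b v :=
  funext fun x => by simp [simplexConcat, window_sub, sub_dotProduct]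

variable [Fintype F] [Fintype (ℙ F (Fin b → F))]

theorem card_fin_prod_projectivization :
    Fintype.card (Fin n × ℙ F (Fin b → F))
      = (Fintype.card F ^ b - 1) * n / (Fintype.card F - 1) := by
  have hq : 1 < Fintype.card F := Fintype.one_lt_card
  have hcard := Projectivization.card F (Fin b → F)
  rw [Nat.card_fun, Nat.card_fin, Nat.card_eq_fintype_card (α := F),
    Nat.card_eq_fintype_card] at hcard
  rw [hcard, Fintype.card_prod, Fintype.card_fin, Nat.mul_right_comm,
    Nat.mul_div_cancel _ (by omega), mul_comm]

variable [DecidableEq F]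

theorem hammingNorm_simplexConcat (u : Fin n → F) :
    hammingNorm (simplexConcat b u) = wtb b u * Fintype.card F ^ (b - 1) := by
  have hrow : ∀ i : Fin n, #{p | simplexConcat b u (i, p) ≠ 0}
      = if window b u i ≠ 0 then Fintype.card F ^ (b - 1) else 0 := by
    intro i
    split_ifs with hw
    · rw [← card_dotProduct_rep_ne_zero hw, Nat.card_eq_fintype_card, Fintype.card_subtype]
      rfl
    · simp [simplexConcat, not_not.mp hw]
  rw [hammingNorm, card_filter, Fintype.sum_prod_type]
  simp_rw [← card_filter]
  rw [sum_congr rfl fun i _ => hrow i,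
    Fin.sum_univ_eq_sum_range (fun i => if window b u i ≠ 0 then Fintype.card F ^ (b - 1) else 0),
    ← sum_filter, sum_const, smul_eq_mul, wtb_eq_card_window_ne_zero]

theorem hammingDist_simplexConcat (u v : Fin n → F) :
    hammingDist (simplexConcat b u) (simplexConcat b v)
      = db b u v * Fintype.card F ^ (b - 1) := by
  rw [hammingDist_comm, hammingDist_eq_hammingNorm, neg_add_eq_sub, ← simplexConcat_sub,
    hammingNorm_simplexConcat]
  rfl

end SimplexConcatenation

theorem lp_positivity_general {Fq : Type*} [Field Fq] [Fintype Fq] [DecidableEq Fq]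
    {n b k : ℕ} (C : Finset (Fin n → Fq)) :
    0 ≤ ∑ i ∈ Finset.range (n + 1),
        (((C ×ˢ C).filter fun p => db b p.1 p.2 = i).card : ℝ) / (C.card : ℝ) *
          ∑ j ∈ Finset.range (k + 1),
            (-1 : ℝ) ^ j * ((Fintype.card Fq : ℝ) - 1) ^ (k - j) *
              ((i * Fintype.card Fq ^ (b - 1)).choose j : ℝ) *
              (((Fintype.card Fq ^ b - 1) * n / (Fintype.card Fq - 1)
                  - i * Fintype.card Fq ^ (b - 1)).choose (k - j) : ℝ) := by
  classical
  let := Fintype.ofFinite (ℙ Fq (Fin b → Fq))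
  have hdelsarte := sum_krawtchouk_hammingDist_nonneg (simplexConcat b) C k
  simp only [hammingDist_simplexConcat, card_fin_prod_projectivization] at hdelsarte
  have hfibers := sum_fiberwise_of_maps_to' (s := C ×ˢ C) (t := range (n + 1))
    (g := fun p => db b p.1 p.2) (fun p _ => mem_range_succ_iff.mpr (wtb_le (p.1 - p.2)))
    (fun i => krawtchouk ℝ ((Fintype.card Fq ^ b - 1) * n / (Fintype.card Fq - 1))
      (Fintype.card Fq) k (i * Fintype.card Fq ^ (b - 1)))
  simp only [sum_const, nsmul_eq_mul] at hfibers
  rw [← hfibers] at hdelsarte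
  simp_rw [div_mul_eq_mul_div, ← sum_div]
  exact div_nonneg hdelsarte (Nat.cast_nonneg _)

/-- Lemma 5.5: for a code `C ⊆ Fq^n` with `b`-symbol distance distribution
`B_i = |{(u,v) ∈ C² : d_b(u,v) = i}| / |C|`, one has
`Σ_{i=0}^{n} B_i · K_k^{N,q}(i·q^{b-1}) ≥ 0` for all `0 ≤ k ≤ n`,
where `N = (q^b-1)n/(q-1)`. -/
theorem lp_positivity {Fq : Type*} [Field Fq] [Fintype Fq] [DecidableEq Fq]
    {n b k : ℕ} (hb1 : 1 ≤ b) (hbn : b ≤ n) (hk : k ≤ n)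
    (C : Finset (Fin n → Fq)) (hC : C.Nonempty) :
    0 ≤ ∑ i ∈ Finset.range (n + 1),
        (((C ×ˢ C).filter fun p => db b p.1 p.2 = i).card : ℝ) / (C.card : ℝ) *
          ∑ j ∈ Finset.range (k + 1),
            (-1 : ℝ) ^ j * ((Fintype.card Fq : ℝ) - 1) ^ (k - j) *
              ((i * Fintype.card Fq ^ (b - 1)).choose j : ℝ) *
              (((Fintype.card Fq ^ b - 1) * n / (Fintype.card Fq - 1)
                  - i * Fintype.card Fq ^ (b - 1)).choose (k - j) : ℝ) :=
  lp_positivity_general C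
end
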